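/- For real x in the interval (ν, ν + ℓ − 1) with ν, ℓ positive integers, δ ≠ 0 real, and σ = −x + iδ, one has |Γ(ν + σ)/Γ(ν + ℓ + σ)| ≤ M(δ) · C(ℓ−2, ⌊x⌋−ν) / Γ(ℓ − 1), where M(δ) > 0 depends only on δ and C(·,·) is a binomial coefficient. -/
import Mathlib

open Nat

lemma prod_range_sub_eq_factorial (k : ℕ) :
    ∏ j ∈ Finset.range k, (k - j) = k ! := by
  induction k with
  | zero => simp
  | succ k ih =>
    rw [Finset.prod_range_succ']
    simp only [Nat.succ_sub_succ, Nat.sub_zero, ih, Nat.factorial_succ]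
    ring

lemma gamma_shift (z : ℂ) (hz : ∀ m : ℕ, z + m ≠ 0) (n : ℕ) :
    Complex.Gamma (z + n) = (∏ j ∈ Finset.range n, (z + j)) * Complex.Gamma z := by
  induction n with
  | zero => simp
  | succ n ih =>
    have h : (z + (n + 1 : ℕ) : ℂ) = (z + n) + 1 := by push_cast; ring
    rw [h, Complex.Gamma_add_one _ (hz n), ih, Finset.prod_range_succ]
    ring

theorem gamma_ratio_binomial_bound (δ : ℝ) (hδ : δ ≠ 0) :
    ∃ M > 0, ∀ ν ℓ : ℕ, 1 ≤ ν → 1 ≤ ℓ → ∀ x : ℝ,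
      x ∈ Set.Ioo (ν : ℝ) ((ν : ℝ) + ℓ - 1) →
      ‖Complex.Gamma ((ν : ℂ) + (-(x : ℂ) + (δ : ℂ) * Complex.I)) /
          Complex.Gamma ((ν : ℂ) + (ℓ : ℂ) + (-(x : ℂ) + (δ : ℂ) * Complex.I))‖ ≤
        M * (Nat.choose (ℓ - 2) ((Int.floor x).toNat - ν) : ℝ) /
          Real.Gamma ((ℓ : ℝ) - 1) := by
  set m : ℝ := min |δ| 1 with hm_def
  have hm : 0 < m := lt_min (abs_pos.2 hδ) one_pos
  refine ⟨(m * m)⁻¹, by positivity, ?_⟩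
  intro ν ℓ hν hℓ x hx
  obtain ⟨hx1, hx2⟩ := hx
  -- ℓ ≥ 2
  have hℓ2 : 2 ≤ ℓ := by
    by_contra h
    interval_cases ℓ <;> simp_all <;> linarith
  -- floor facts
  set nk : ℕ := (Int.floor x).toNat with hnk_def
  have hfl_nonneg : (0 : ℤ) ≤ ⌊x⌋ := by
    have : (1:ℝ) ≤ x := le_trans (by exact_mod_cast hν) hx1.le
    exact le_trans zero_le_one (Int.le_floor.2 (by exact_mod_cast this))
  have hnk_cast : ((nk : ℤ)) = ⌊x⌋ := Int.toNat_of_nonneg hfl_nonneg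
  have hnk_le_x : (nk : ℝ) ≤ x := by
    have := Int.floor_le x
    rw [← hnk_cast] at this; exact_mod_cast this
  have hx_lt : x < (nk : ℝ) + 1 := by
    have := Int.lt_floor_add_one x
    rw [← hnk_cast] at this; exact_mod_cast this
  have hν_le_nk : ν ≤ nk := by
    have : (ν : ℤ) ≤ ⌊x⌋ := Int.le_floor.2 (by exact_mod_cast hx1.le)
    omega
  have hnk_ub : nk ≤ ν + ℓ - 2 := by
    have h1 : (nk : ℝ) < (ν : ℝ) + ℓ - 1 := lt_of_le_of_lt hnk_le_x hx2
    have : (nk : ℝ) + 1 < (ν : ℝ) + ℓ := by linarith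
    have : nk + 1 < ν + ℓ := by exact_mod_cast this
    omega
  set k : ℕ := nk - ν with hk_def
  have hk_le : k ≤ ℓ - 2 := by omega
  set r : ℕ := ℓ - 2 - k with hr_def
  have hℓ_eq : ℓ = k + (2 + r) := by omega
  have hxk : (ν : ℝ) + k ≤ x := by
    have : ((ν + k : ℕ) : ℝ) ≤ x := by
      rw [show ν + k = nk by omega]; exact hnk_le_x
    push_cast at this; linarith
  have hxk2 : x < (ν : ℝ) + k + 1 := by
    have : x < ((ν + k : ℕ) : ℝ) + 1 := by
      rw [show ν + k = nk by omega]; exact hx_lt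
    push_cast at this; linarith
  -- the shift variable
  set z : ℂ := (ν : ℂ) + (-(x : ℂ) + (δ : ℂ) * Complex.I) with hz_def
  have hz_im : ∀ j : ℕ, (z + j).im = δ := by
    intro j; simp [hz_def]
  have hz_re : ∀ j : ℕ, (z + j).re = (ν : ℝ) - x + j := by
    intro j; simp [hz_def]; ring
  have hz_ne : ∀ j : ℕ, z + (j : ℂ) ≠ 0 := by
    intro j h
    have := congrArg Complex.im h
    rw [hz_im j] at this
    exact hδ (by simpa using this)
  have hGz_ne : Complex.Gamma z ≠ 0 := by
    apply Complex.Gamma_ne_zero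
    intro j h
    have := congrArg Complex.im h
    have h2 : (z).im = δ := by simpa using hz_im 0
    rw [h2] at this
    exact hδ (by simpa using this)
  have hshift : Complex.Gamma (z + ℓ) = (∏ j ∈ Finset.range ℓ, (z + j)) * Complex.Gamma z :=
    gamma_shift z hz_ne ℓ
  have hzeq : (ν : ℂ) + (ℓ : ℂ) + (-(x : ℂ) + (δ : ℂ) * Complex.I) = z + ℓ := by
    rw [hz_def]; ring
  set P : ℂ := ∏ j ∈ Finset.range ℓ, (z + j) with hP_def
  have hP_ne : P ≠ 0 := by
    rw [hP_def]
    exact Finset.prod_ne_zero_iff.2 fun j _ => hz_ne j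
  have hratio : Complex.Gamma z / Complex.Gamma (z + ℓ) = P⁻¹ := by
    rw [hshift]
    field_simp
  -- lower bound function
  set g : ℕ → ℝ := fun j => if j < k then (k : ℝ) - j else if j < k + 2 then m else (j : ℝ) - (k + 1) with hg_def
  have hg_nonneg : ∀ j ∈ Finset.range ℓ, 0 ≤ g j := by
    intro j _
    simp only [hg_def]
    split_ifs with h1 h2
    · have : (j : ℝ) < k := by exact_mod_cast h1
      linarith
    · exact hm.le
    · have : (k : ℝ) + 2 ≤ j := by exact_mod_cast (not_lt.1 h2)
      linarith
  have hg_le : ∀ j ∈ Finset.range ℓ, g j ≤ ‖z + (j : ℂ)‖ := by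
    intro j _
    simp only [hg_def]
    have hre : |(z + j).re| ≤ ‖z + (j : ℂ)‖ := Complex.abs_re_le_norm _
    have him : |(z + j).im| ≤ ‖z + (j : ℂ)‖ := Complex.abs_im_le_norm _
    rw [hz_re j] at hre
    rw [hz_im j] at him
    split_ifs with h1 h2
    · refine le_trans ?_ hre
      refine le_abs.2 (Or.inr ?_)
      have : (j : ℝ) + 1 ≤ k := by exact_mod_cast h1
      linarith
    · exact le_trans (le_trans (min_le_left _ _) (le_refl |δ|)) him
    · refine le_trans ?_ hre
      refine le_abs.2 (Or.inl ?_)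
      have : (k : ℝ) + 2 ≤ j := by exact_mod_cast (not_lt.1 h2)
      linarith
  have hnormP : ‖P‖ = ∏ j ∈ Finset.range ℓ, ‖z + (j : ℂ)‖ := by
    rw [hP_def]; exact norm_prod _ _
  -- compute the product of g
  have hprod_g : ∏ j ∈ Finset.range ℓ, g j = (k ! : ℝ) * (m * m * r !) := by
    rw [hℓ_eq, Finset.prod_range_add]
    congr 1
    · -- first block: j < k
      have : ∀ j ∈ Finset.range k, g j = ((k - j : ℕ) : ℝ) := by
        intro j hj
        rw [Finset.mem_range] at hj
        simp only [hg_def, if_pos hj]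
        have : j ≤ k := hj.le
        push_cast [Nat.cast_sub this]
        ring
      rw [Finset.prod_congr rfl this, ← Nat.cast_prod, prod_range_sub_eq_factorial]
    · rw [Finset.prod_range_add]
      congr 1
      · rw [Finset.prod_range_succ, Finset.prod_range_one]
        have h1 : g k = m := by
          simp [hg_def]
        have h2 : g (k + 1) = m := by
          simp [hg_def]
        rw [show k + 0 = k from rfl, h1, h2]
      · have : ∀ j ∈ Finset.range r, g (k + (2 + j)) = ((j + 1 : ℕ) : ℝ) := by
          intro j _
          simp only [hg_def]
          have h1 : ¬ (k + (2 + j) < k) := by omega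
          have h2 : ¬ (k + (2 + j) < k + 2) := by omega
          simp only [if_neg h1, if_neg h2]
          push_cast; ring
        rw [Finset.prod_congr rfl this, ← Nat.cast_prod]
        norm_cast
        rw [Finset.prod_range_add_one_eq_factorial]
  have hlow : (k ! : ℝ) * (m * m * r !) ≤ ‖P‖ := by
    rw [hnormP, ← hprod_g]
    exact Finset.prod_le_prod hg_nonneg hg_le
  have hlow_pos : (0 : ℝ) < (k ! : ℝ) * (m * m * r !) := by positivity
  -- gamma value on ℝ side
  have hGammaℝ : Real.Gamma ((ℓ : ℝ) - 1) = ((ℓ - 2)! : ℝ) := by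
    have h : (ℓ : ℝ) - 1 = ((ℓ - 2 : ℕ) : ℝ) + 1 := by
      have : (2 : ℕ) ≤ ℓ := hℓ2
      push_cast [Nat.cast_sub this]
      ring
    rw [h, Real.Gamma_nat_eq_factorial]
  have hchoose : ((ℓ - 2).choose k * k ! * r ! : ℕ) = (ℓ - 2)! := by
    have := Nat.choose_mul_factorial_mul_factorial hk_le
    rwa [show ℓ - 2 - k = r by omega] at this
  -- put everything together
  rw [hzeq, hratio, norm_inv]
  have hkey : ‖P‖⁻¹ ≤ ((k ! : ℝ) * (m * m * r !))⁻¹ :=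
    inv_anti₀ hlow_pos hlow
  refine le_trans hkey ?_
  rw [hGammaℝ]
  have hcast : ((ℓ - 2).choose k : ℝ) * k ! * r ! = ((ℓ - 2)! : ℝ) := by
    exact_mod_cast congrArg (Nat.cast : ℕ → ℝ) hchoose
  have hc : (0 : ℝ) < ((ℓ - 2).choose k : ℝ) := by
    exact_mod_cast Nat.choose_pos hk_le
  have hk0 : (0 : ℝ) < (k ! : ℝ) := by exact_mod_cast Nat.factorial_pos k
  have hr0 : (0 : ℝ) < (r ! : ℝ) := by exact_mod_cast Nat.factorial_pos r
  have heq : (m * m)⁻¹ * ((ℓ - 2).choose k : ℝ) / ((ℓ - 2)! : ℝ)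
      = ((k ! : ℝ) * (m * m * r !))⁻¹ := by
    rw [← hcast]
    field_simp
  rw [heq]
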